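/- arXiv:1206.0265 — 7 statements merged into one kernel-verified Lean document; each statement's English description precedes it below -/
import Mathlib

section
/- Let N be a positive integer, let μ denote Lebesgue measure on ℝ^N, let C ⊆ ℝ^N be a convex set with nonempty interior, and let U ⊆ ℝ^N be a density open set. If U ∩ C ≠ ∅, then μ(U ∩ C) > 0. -/
open MeasureTheory Metric Filter

/-- A set `U ⊆ ℝ^N` is density open if it is Lebesgue measurable and every point of `U`
is a Lebesgue density point of `U`. -/
def DensityOpen {N : ℕ} (U : Set (EuclideanSpace ℝ (Fin N))) : Prop :=
  NullMeasurableSet U volume ∧ ∀ x ∈ U,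
    Tendsto (fun r : ℝ => volume (U ∩ ball x r) / volume (ball x r))
      (nhdsWithin 0 (Set.Ioi 0)) (nhds 1)

/-!
A convex set `C` with nonempty interior has positive lower density at each of its points `x`:
the homothety of center `x` and ratio `r / D` maps `C ∩ B(x, D)` into `C ∩ B(x, r)` and scales
all volumes by the same factor, so `μ(C ∩ B(x, r)) / μ(B(x, r))` is at least its value at a
radius `D` for which `B(x, D)` contains a ball inside `C`. If `x ∈ U` is a density point of `U`
and `μ(U ∩ C) = 0`, then `C ∩ B(x, r)` lies up to a null set in `B(x, r) \ U`, whose relative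
measure tends to `0`: a contradiction.
-/

open Topology AffineMap Module Measure

theorem measure_inter_pos_of_tendsto_density {X : Type*} [PseudoMetricSpace X] [ProperSpace X]
    [MeasurableSpace X] {μ : Measure X} [IsFiniteMeasureOnCompacts μ] [μ.IsOpenPosMeasure]
    {U S : Set X} {x : X} {c : ENNReal} (hU : NullMeasurableSet U μ)
    (hdens : Tendsto (fun r => μ (U ∩ ball x r) / μ (ball x r)) (𝓝[>] 0) (𝓝 1))
    (hc : c ≠ 0) (hS : ∀ᶠ r in 𝓝[>] 0, c * μ (ball x r) ≤ μ (S ∩ ball x r)) :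
    0 < μ (U ∩ S) := by
  refine pos_iff_ne_zero.2 fun hUS => ?_
  have hle : ∀ᶠ r in 𝓝[>] 0, μ (U ∩ ball x r) / μ (ball x r) + c ≤ 1 := by
    filter_upwards [hS, self_mem_nhdsWithin] with r hr (hr0 : 0 < r)
    have hB0 : μ (ball x r) ≠ 0 := (measure_ball_pos μ x hr0).ne'
    have hBtop : μ (ball x r) ≠ ⊤ := measure_ball_lt_top.ne
    have hSU : μ (S ∩ ball x r) ≤ μ (ball x r \ U) :=
      calc μ (S ∩ ball x r) ≤ μ (U ∩ S ∪ ball x r \ U) :=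
            measure_mono fun y ⟨hyS, hyB⟩ => by by_cases hyU : y ∈ U <;> simp [*]
        _ ≤ μ (U ∩ S) + μ (ball x r \ U) := measure_union_le _ _
        _ = μ (ball x r \ U) := by rw [hUS, zero_add]
    have hsplit : μ (U ∩ ball x r) + μ (ball x r \ U) = μ (ball x r) := by
      rw [Set.inter_comm]; exact measure_inter_add_sdiff₀ _ hU
    calc μ (U ∩ ball x r) / μ (ball x r) + c
        = (μ (U ∩ ball x r) + c * μ (ball x r)) / μ (ball x r) := by
          rw [ENNReal.add_div, ENNReal.mul_div_cancel_right hB0 hBtop]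
      _ ≤ μ (ball x r) / μ (ball x r) := by
          gcongr ?_ / _
          calc μ (U ∩ ball x r) + c * μ (ball x r)
              ≤ μ (U ∩ ball x r) + μ (ball x r \ U) := by gcongr; exact hr.trans hSU
            _ = μ (ball x r) := hsplit
      _ = 1 := ENNReal.div_self hB0 hBtop
  exact (ENNReal.lt_add_right ENNReal.one_ne_top hc).not_ge
    (le_of_tendsto (hdens.add tendsto_const_nhds) hle)

section Convex

variable {E : Type*} [NormedAddCommGroup E] [NormedSpace ℝ E] {C : Set E} {x : E}

theorem Convex.image_homothety_inter_ball_subset (hC : Convex ℝ C) (hx : x ∈ C) {t : ℝ}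
    (ht₀ : 0 < t) (ht₁ : t ≤ 1) (D : ℝ) :
    homothety x t '' (C ∩ ball x D) ⊆ C ∩ ball x (t * D) := by
  rintro _ ⟨y, ⟨hyC, hyD⟩, rfl⟩
  refine ⟨homothety_eq_lineMap x t y ▸ hC.lineMap_mem hx hyC ⟨ht₀.le, ht₁⟩, ?_⟩
  rw [mem_ball, dist_homothety_center, Real.norm_of_nonneg ht₀.le, dist_comm]
  exact mul_lt_mul_of_pos_left hyD ht₀

variable [FiniteDimensional ℝ E] [MeasurableSpace E] [BorelSpace E] (μ : Measure E)
  [μ.IsAddHaarMeasure]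

theorem Convex.measure_inter_ball_div_mul_le (hC : Convex ℝ C) (hx : x ∈ C) {r D : ℝ}
    (hr : 0 < r) (hrD : r ≤ D) :
    μ (C ∩ ball x D) / μ (ball x D) * μ (ball x r) ≤ μ (C ∩ ball x r) := by
  have hD : 0 < D := hr.trans_le hrD
  set t := r / D
  have htD : t * D = r := div_mul_cancel₀ r hD.ne'
  have hball : μ (ball x r) = ENNReal.ofReal (t ^ finrank ℝ E) * μ (ball x D) := by
    rw [← htD, addHaar_ball_mul_of_pos μ x (div_pos hr hD), addHaar_ball_center μ x D]
  calc μ (C ∩ ball x D) / μ (ball x D) * μ (ball x r)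
      = ENNReal.ofReal (t ^ finrank ℝ E) * μ (C ∩ ball x D) := by
        rw [hball, mul_left_comm, ENNReal.div_mul_cancel (measure_ball_pos μ x hD).ne'
          measure_ball_lt_top.ne]
    _ = μ (homothety x t '' (C ∩ ball x D)) := by
        rw [addHaar_image_homothety, abs_of_nonneg (by positivity)]
    _ ≤ μ (C ∩ ball x r) := htD ▸ measure_mono
        (hC.image_homothety_inter_ball_subset hx (div_pos hr hD) ((div_le_one hD).2 hrD) D)

theorem Convex.exists_pos_lower_density (hC : Convex ℝ C) (hx : x ∈ C)
    (hint : (interior C).Nonempty) :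
    ∃ c ≠ 0, ∀ᶠ r in 𝓝[>] 0, c * μ (ball x r) ≤ μ (C ∩ ball x r) := by
  obtain ⟨y, hy⟩ := hint
  obtain ⟨ε, hε, hyC⟩ := isOpen_iff.1 isOpen_interior y hy
  set D := dist y x + ε
  have hyD : ball y ε ⊆ C ∩ ball x D := fun z hz =>
    ⟨interior_subset (hyC hz), (dist_triangle z y x).trans_lt (by rw [mem_ball] at hz; linarith)⟩
  refine ⟨μ (C ∩ ball x D) / μ (ball x D), ?_, ?_⟩
  · exact ENNReal.div_ne_zero.2 ⟨((measure_ball_pos μ y hε).trans_le (measure_mono hyD)).ne',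
      measure_ball_lt_top.ne⟩
  · filter_upwards [Ioc_mem_nhdsGT (by positivity : (0 : ℝ) < D)] with r ⟨hr, hrD⟩
    exact hC.measure_inter_ball_div_mul_le μ hx hr hrD

end Convex

theorem stmt_0_general {N : ℕ} (C U : Set (EuclideanSpace ℝ (Fin N)))
    (hC : Convex ℝ C) (hCint : (interior C).Nonempty)
    (hU : DensityOpen U) (hUC : (U ∩ C).Nonempty) :
    0 < volume (U ∩ C) := by
  obtain ⟨x, hxU, hxC⟩ := hUC
  obtain ⟨c, hc, hC_density⟩ := hC.exists_pos_lower_density volume hxC hCint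
  exact measure_inter_pos_of_tendsto_density hU.1 (hU.2 x hxU) hc hC_density

theorem stmt_0 {N : ℕ} (hN : 0 < N) (C U : Set (EuclideanSpace ℝ (Fin N)))
    (hC : Convex ℝ C) (hCint : (interior C).Nonempty)
    (hU : DensityOpen U) (hUC : (U ∩ C).Nonempty) :
    0 < volume (U ∩ C) :=
  stmt_0_general C U hC hCint hU hUC
end

section
/- Let N be a positive integer, let μ denote Lebesgue measure on ℝ^N, let C ⊆ ℝ^N be a convex set, and let U ⊆ ℝ^N be a density open set. If U ∩ (ℝ^N \ C) ≠ ∅, then μ(U ∩ (ℝ^N \ C)) > 0. -/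
open MeasureTheory Metric Filter

open scoped ENNReal

/-! The point reflection `y ↦ 2x - y` preserves every ball centred at `x` and, since `x` is the
midpoint of `y` and its reflection, maps a convex set avoiding `x` to a set disjoint from it.
Hence such a convex set fills at most half of every ball around `x`, so `x` cannot be a density
point of a set that lies, up to a null set, inside it. -/

lemma preimage_sub_left_ball {E : Type*} [SeminormedAddCommGroup E] (x : E) (r : ℝ) :
    (x + x - ·) ⁻¹' ball x r = ball x r := by
  ext y
  rw [Set.mem_preimage, mem_ball, mem_ball, dist_eq_norm, dist_eq_norm,
    show x + x - y - x = -(y - x) by abel, norm_neg]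

lemma Convex.two_mul_measure_inter_ball_le {E : Type*} [NormedAddCommGroup E]
    [NormedSpace ℝ E] [MeasurableSpace E] [BorelSpace E] (μ : Measure E)
    [μ.IsAddLeftInvariant] [μ.IsNegInvariant] {s : Set E} (hs : Convex ℝ s)
    (hsm : NullMeasurableSet s μ) {x : E} (hx : x ∉ s) (r : ℝ) :
    2 * μ (s ∩ ball x r) ≤ μ (ball x r) := by
  set A := s ∩ ball x r
  have hAm : NullMeasurableSet A μ := hsm.inter measurableSet_ball.nullMeasurableSet
  have hreflect := μ.measurePreserving_sub_left (x + x)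
  have hdisj : Disjoint A ((x + x - ·) ⁻¹' A) := by
    refine Set.disjoint_left.2 fun y ⟨hy, _⟩ ⟨hy', _⟩ => hx ?_
    convert hs hy hy' (by norm_num : (0 : ℝ) ≤ 1 / 2) (by norm_num : (0 : ℝ) ≤ 1 / 2)
      (by norm_num) using 1
    module
  have hsub : A ∪ (x + x - ·) ⁻¹' A ⊆ ball x r := by
    refine Set.union_subset Set.inter_subset_right ?_
    rw [Set.preimage_inter, preimage_sub_left_ball]
    exact Set.inter_subset_right
  calc 2 * μ A = μ A + μ ((x + x - ·) ⁻¹' A) := by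
        rw [two_mul, hreflect.measure_preimage hAm]
    _ = μ (A ∪ (x + x - ·) ⁻¹' A) := (measure_union₀' hAm hdisj.aedisjoint).symm
    _ ≤ μ (ball x r) := measure_mono hsub

theorem stmt_1_general {N : ℕ} (C U : Set (EuclideanSpace ℝ (Fin N)))
    (hC : Convex ℝ C) (hU : DensityOpen U) (hUC : (U ∩ Cᶜ).Nonempty) :
    0 < volume (U ∩ Cᶜ) := by
  obtain ⟨x, hxU, hxC⟩ := hUC
  refine pos_iff_ne_zero.2 fun hnull => ?_
  have hhalf : ∀ r > 0, volume (U ∩ ball x r) / volume (ball x r) ≤ 2⁻¹ := by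
    intro r _
    refine ENNReal.div_le_of_le_mul ?_
    have hsplit : U ∩ ball x r ⊆ (U ∩ Cᶜ) ∪ (C ∩ ball x r) := fun y ⟨hyU, hyB⟩ =>
      (em (y ∈ C)).elim (fun hyC => .inr ⟨hyC, hyB⟩) (fun hyC => .inl ⟨hyU, hyC⟩)
    calc volume (U ∩ ball x r) ≤ volume (U ∩ Cᶜ) + volume (C ∩ ball x r) :=
          (measure_mono hsplit).trans (measure_union_le _ _)
      _ = 2⁻¹ * (2 * volume (C ∩ ball x r)) := by
          rw [hnull, zero_add, ← mul_assoc,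
            ENNReal.inv_mul_cancel two_ne_zero ENNReal.ofNat_ne_top, one_mul]
      _ ≤ 2⁻¹ * volume (ball x r) := mul_le_mul_right
          (hC.two_mul_measure_inter_ball_le volume (hC.nullMeasurableSet volume) hxC r) _
  have hone_le_half : (1 : ℝ≥0∞) ≤ 2⁻¹ :=
    le_of_tendsto (hU.2 x hxU) (eventually_nhdsWithin_of_forall hhalf)
  exact absurd hone_le_half (by norm_num)

theorem stmt_1 {N : ℕ} (hN : 0 < N) (C U : Set (EuclideanSpace ℝ (Fin N)))
    (hC : Convex ℝ C) (hU : DensityOpen U) (hUC : (U ∩ Cᶜ).Nonempty) :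
    0 < volume (U ∩ Cᶜ) :=
  stmt_1_general C U hC hU hUC
end

section
/- Let f : ℝ^N → ℝ be Lebesgue measurable. The following two statements are equivalent: (i) for every density open set U ⊆ ℝ^N, the pointwise supremum of f over U equals the essential supremum of f over U; (ii) for every x₀ ∈ ℝ^N, every density open set U ⊆ ℝ^N containing x₀, and every ε > 0, the set {x ∈ U : f(x) ≥ f(x₀) − ε} has positive Lebesgue measure. -/
open MeasureTheory Metric Filter

/-!
A value `y` is at most the essential supremum of `f` on `U` iff every superlevel set
`{x ∈ U | y - ε ≤ f x}` has positive measure. Applied to `y = f x₀` for all `x₀ ∈ U`, this says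
exactly that `⨆ x ∈ U, f x ≤ essSup`, while the reverse inequality always holds.
-/

namespace MeasureTheory

variable {α : Type*} [MeasurableSpace α] {μ : Measure α} {U : Set α}

theorem measure_sep_le_eq_zero_iff_ae_restrict_lt {β : Type*} [LinearOrder β] {f : α → β}
    (hU : NullMeasurableSet U μ) (c : β) :
    μ {x ∈ U | c ≤ f x} = 0 ↔ ∀ᵐ x ∂μ.restrict U, f x < c := by
  rw [ae_iff, Measure.restrict_apply₀' hU, Set.inter_comm]
  simp only [not_lt]
  rfl

theorem essSup_restrict_le_biSup {β : Type*} [CompleteLattice β] (f : α → β)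
    (hU : NullMeasurableSet U μ) :
    essSup f (μ.restrict U) ≤ ⨆ x ∈ U, f x :=
  essSup_le_of_ae_le _ <| by
    filter_upwards [ae_restrict_mem₀ hU] with x hx using le_biSup f hx

theorem coe_le_essSup_restrict_iff {f : α → ℝ} (hU : NullMeasurableSet U μ) (y : ℝ) :
    (y : EReal) ≤ essSup (fun x => (f x : EReal)) (μ.restrict U) ↔
      ∀ ε : ℝ, 0 < ε → 0 < μ {x ∈ U | y - ε ≤ f x} := by
  constructor
  · intro hy ε hε
    refine pos_iff_ne_zero.2 fun hnull => ?_
    have hlt := (measure_sep_le_eq_zero_iff_ae_restrict_lt hU _).1 hnull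
    have hle : essSup (fun x => (f x : EReal)) (μ.restrict U) ≤ ((y - ε : ℝ) : EReal) :=
      essSup_le_of_ae_le _ <| by
        filter_upwards [hlt] with x hx using EReal.coe_le_coe_iff.2 hx.le
    have := EReal.coe_le_coe_iff.1 (hy.trans hle)
    linarith
  · intro hpos
    by_contra! hlt
    obtain ⟨b, hb_ess, hb_y⟩ := EReal.lt_iff_exists_real_btwn.1 hlt
    have hnull : μ {x ∈ U | b ≤ f x} = 0 := by
      refine (measure_sep_le_eq_zero_iff_ae_restrict_lt hU b).2 ?_
      filter_upwards [ae_lt_of_essSup_lt hb_ess] with x hx using EReal.coe_lt_coe_iff.1 hx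
    have hε : 0 < y - b := sub_pos.2 (EReal.coe_lt_coe_iff.1 hb_y)
    simpa [hnull] using hpos (y - b) hε

end MeasureTheory

theorem stmt_2_general {N : ℕ} (f : EuclideanSpace ℝ (Fin N) → ℝ) :
    (∀ U : Set (EuclideanSpace ℝ (Fin N)), DensityOpen U →
        (⨆ x ∈ U, (f x : EReal)) = essSup (fun x => (f x : EReal)) (volume.restrict U)) ↔
      (∀ x₀ : EuclideanSpace ℝ (Fin N), ∀ U : Set (EuclideanSpace ℝ (Fin N)),
        DensityOpen U → x₀ ∈ U → ∀ ε : ℝ, 0 < ε →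
          0 < volume {x ∈ U | f x₀ - ε ≤ f x}) := by
  constructor
  · intro h x₀ U hU hx₀
    refine (coe_le_essSup_restrict_iff hU.1 (f x₀)).1 ?_
    exact h U hU ▸ le_biSup (fun x => (f x : EReal)) hx₀
  · intro h U hU
    refine le_antisymm (iSup₂_le fun x₀ hx₀ => ?_) (essSup_restrict_le_biSup _ hU.1)
    exact (coe_le_essSup_restrict_iff hU.1 (f x₀)).2 (h x₀ U hU hx₀)

theorem stmt_2 {N : ℕ} (f : EuclideanSpace ℝ (Fin N) → ℝ)
    (hf : NullMeasurable f volume) :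
    (∀ U : Set (EuclideanSpace ℝ (Fin N)), DensityOpen U →
        (⨆ x ∈ U, (f x : EReal)) = essSup (fun x => (f x : EReal)) (volume.restrict U)) ↔
      (∀ x₀ : EuclideanSpace ℝ (Fin N), ∀ U : Set (EuclideanSpace ℝ (Fin N)),
        DensityOpen U → x₀ ∈ U → ∀ ε : ℝ, 0 < ε →
          0 < volume {x ∈ U | f x₀ - ε ≤ f x}) :=
  stmt_2_general f
end

section
/- Let f : ℝ^N → ℝ be Lebesgue measurable. The following two statements are equivalent: (i) for every density open set U ⊆ ℝ^N, the pointwise infimum of f over U equals the essential infimum of f over U; (ii) for every x₀ ∈ ℝ^N, every density open set U ⊆ ℝ^N containing x₀, and every ε > 0, the set {x ∈ U : f(x) < f(x₀) + ε} has positive Lebesgue measure. -/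
/-! The equivalence holds separately for each measurable set `U`. The pointwise infimum over `U`
is always at most the essential infimum on `U`, since almost every point of `U` lies in `U`. The
reverse inequality says that the essential infimum is at most `f x₀` for each `x₀ ∈ U`, and the
essential infimum lies below `c` exactly when every sublevel set `{f < b}` with `b > c` has
positive measure. -/

open MeasureTheory Metric Filter

section EssInf

variable {α β : Type*} [MeasurableSpace α] {μ : Measure α} [CompleteLinearOrder β] {f : α → β}

theorem essInf_le_iff_forall_lt_measure_ne_zero {c : β} :
    essInf f μ ≤ c ↔ ∀ b, c < b → μ {x | f x < b} ≠ 0 := by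
  constructor
  · intro hle b hcb hb
    have hb_le : b ≤ essInf f μ := by
      rw [essInf_eq_sSup]
      exact le_sSup hb
    exact (hcb.trans_le hb_le).not_ge hle
  · intro h
    by_contra! hlt
    rw [essInf_eq_sSup, lt_sSup_iff] at hlt
    obtain ⟨b, hb, hcb⟩ := hlt
    exact h b hcb hb

theorem biInf_le_essInf_restrict {U : Set α} (hU : NullMeasurableSet U μ) :
    ⨅ x ∈ U, f x ≤ essInf f (μ.restrict U) :=
  le_essInf_of_ae_le _ <| by
    filter_upwards [ae_restrict_mem₀ hU] with x hx using iInf₂_le x hx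

theorem biInf_eq_essInf_restrict_iff {U : Set α} (hU : NullMeasurableSet U μ) :
    (⨅ x ∈ U, f x) = essInf f (μ.restrict U) ↔
      ∀ x₀ ∈ U, ∀ b, f x₀ < b → μ {x ∈ U | f x < b} ≠ 0 := by
  rw [le_antisymm_iff, and_iff_right (biInf_le_essInf_restrict hU), le_iInf₂_iff]
  refine forall₂_congr fun x₀ _ => ?_
  rw [essInf_le_iff_forall_lt_measure_ne_zero]
  refine forall₂_congr fun b _ => ?_
  rw [Measure.restrict_apply₀' hU, Set.inter_comm]
  rfl

end EssInf

theorem forall_ereal_lt_measure_ne_zero_iff {α : Type*} [MeasurableSpace α] {μ : Measure α}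
    {g : α → ℝ} {S : Set α} {c : ℝ} :
    (∀ b : EReal, (c : EReal) < b → μ {x ∈ S | (g x : EReal) < b} ≠ 0) ↔
      ∀ ε : ℝ, 0 < ε → 0 < μ {x ∈ S | g x < c + ε} := by
  constructor
  · intro h ε hε
    have hlt : (c : EReal) < (c + ε : ℝ) := by exact_mod_cast (lt_add_of_pos_right c hε)
    simpa only [EReal.coe_lt_coe_iff, pos_iff_ne_zero] using h _ hlt
  · intro h b hb
    obtain ⟨z, hcz, hzb⟩ := EReal.lt_iff_exists_real_btwn.1 hb
    have hcz : c < z := by exact_mod_cast hcz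
    refine ne_of_gt <| (h (z - c) (sub_pos.2 hcz)).trans_le <| measure_mono ?_
    rintro x ⟨hxS, hx⟩
    refine ⟨hxS, lt_trans ?_ hzb⟩
    exact_mod_cast (show g x < z by linarith)

theorem stmt_3_general {N : ℕ} (f : EuclideanSpace ℝ (Fin N) → ℝ) :
    (∀ U : Set (EuclideanSpace ℝ (Fin N)), DensityOpen U →
        (⨅ x ∈ U, (f x : EReal)) = essInf (fun x => (f x : EReal)) (volume.restrict U)) ↔
      (∀ x₀ : EuclideanSpace ℝ (Fin N), ∀ U : Set (EuclideanSpace ℝ (Fin N)),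
        DensityOpen U → x₀ ∈ U → ∀ ε : ℝ, 0 < ε →
          0 < volume {x ∈ U | f x < f x₀ + ε}) := by
  constructor
  · intro h x₀ U hU hx₀
    exact forall_ereal_lt_measure_ne_zero_iff.1
      ((biInf_eq_essInf_restrict_iff hU.1).1 (h U hU) x₀ hx₀)
  · intro h U hU
    exact (biInf_eq_essInf_restrict_iff hU.1).2 fun x₀ hx₀ =>
      forall_ereal_lt_measure_ne_zero_iff.2 (h x₀ U hU hx₀)

theorem stmt_3 {N : ℕ} (f : EuclideanSpace ℝ (Fin N) → ℝ)
    (hf : NullMeasurable f volume) :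
    (∀ U : Set (EuclideanSpace ℝ (Fin N)), DensityOpen U →
        (⨅ x ∈ U, (f x : EReal)) = essInf (fun x => (f x : EReal)) (volume.restrict U)) ↔
      (∀ x₀ : EuclideanSpace ℝ (Fin N), ∀ U : Set (EuclideanSpace ℝ (Fin N)),
        DensityOpen U → x₀ ∈ U → ∀ ε : ℝ, 0 < ε →
          0 < volume {x ∈ U | f x < f x₀ + ε}) :=
  stmt_3_general f
end

section
/- Let f : ℝ^N → [−∞, ∞] be a convex function, i.e. its epigraph {(x,t) ∈ ℝ^N × ℝ : f(x) ≤ t} is a convex subset of ℝ^N × ℝ. Then the pointwise infimum of f over U equals the essential infimum of f over U for every density open set U ⊆ ℝ^N if and only if either f = +∞ identically on ℝ^N, or the domain dom f := {x ∈ ℝ^N : f(x) < +∞} has nonempty interior. -/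
/-!
Convexity of the epigraph makes the sublevel sets `{f ≤ M}` convex, and a convex set with empty
interior is Lebesgue-null. So if `dom f` is nonempty with empty interior, then `f = ⊤` a.e., and on
the density open set `ℝ^N` the essential infimum `⊤` differs from the infimum. Conversely, if
`dom f` has interior, some sublevel set has positive measure, hence interior, so `f ≤ M` on a ball
`B(z, δ)`. Given `x ∈ U` and `c > f x`, convexity gives `f < c` on `B(x + λ(z - x), λδ)` for small
`λ > 0`; these balls fill the fixed proportion `(δ / (|z - x| + δ))^N` of `B(x, λ(|z - x| + δ))`.
If `f > c` a.e. on `U` they miss `U` up to null sets and `x` is not a density point of `U`.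
-/

open MeasureTheory Metric Filter Set Module
open scoped ENNReal Topology

section Epigraph

variable {E : Type*} {f : E → EReal}

lemma le_combo_of_convex_epigraph [AddCommGroup E] [Module ℝ E]
    (hf : Convex ℝ {p : E × ℝ | f p.1 ≤ p.2}) {x y : E} {s t a b : ℝ}
    (hx : f x ≤ s) (hy : f y ≤ t) (ha : 0 ≤ a) (hb : 0 ≤ b) (hab : a + b = 1) :
    f (a • x + b • y) ≤ ↑(a * s + b * t) := by
  simpa using hf (x := (x, s)) (y := (y, t)) hx hy ha hb hab

lemma convex_sublevel_of_convex_epigraph [AddCommGroup E] [Module ℝ E]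
    (hf : Convex ℝ {p : E × ℝ | f p.1 ≤ p.2}) (M : ℝ) : Convex ℝ {x | f x ≤ M} := by
  intro x hx y hy a b ha hb hab
  simpa [← add_mul, hab] using le_combo_of_convex_epigraph hf hx hy ha hb hab

lemma convex_dom_of_convex_epigraph [AddCommGroup E] [Module ℝ E]
    (hf : Convex ℝ {p : E × ℝ | f p.1 ≤ p.2}) : Convex ℝ {x | f x < ⊤} := by
  intro x hx y hy a b ha hb hab
  obtain ⟨s, hs, -⟩ := EReal.exists_between_coe_real hx
  obtain ⟨t, ht, -⟩ := EReal.exists_between_coe_real hy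
  exact (le_combo_of_convex_epigraph hf hs.le ht.le ha hb hab).trans_lt (EReal.coe_lt_top _)

variable [NormedAddCommGroup E] [NormedSpace ℝ E]

/-- The ball `B(x + λ(z - x), λδ)` is the image of `B(z, δ)` under `y ↦ (1 - λ)x + λy`. -/
lemma le_on_ball_of_convex_epigraph (hf : Convex ℝ {p : E × ℝ | f p.1 ≤ p.2})
    {x z : E} {δ M t lam : ℝ} (hM : ∀ y ∈ ball z δ, f y ≤ M) (hx : f x ≤ t)
    (hlam : 0 < lam) (hlam₁ : lam ≤ 1) :
    ∀ p ∈ ball (x + lam • (z - x)) (lam * δ), f p ≤ ↑((1 - lam) * t + lam * M) := by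
  intro p hp
  set y := z + lam⁻¹ • (p - (x + lam • (z - x)))
  have hy : y ∈ ball z δ := by
    rwa [mem_ball, dist_eq_norm, add_sub_cancel_left, norm_smul, Real.norm_eq_abs,
      abs_of_pos (inv_pos.2 hlam), inv_mul_lt_iff₀ hlam, ← dist_eq_norm]
  have hp' : (1 - lam) • x + lam • y = p := by
    simp only [y, smul_add, smul_smul, mul_inv_cancel₀ hlam.ne', one_smul]
    module
  simpa [hp'] using
    le_combo_of_convex_epigraph hf hx (hM y hy) (sub_nonneg.2 hlam₁) hlam.le (by ring)

lemma eventually_lt_on_ball_of_convex_epigraph (hf : Convex ℝ {p : E × ℝ | f p.1 ≤ p.2})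
    {x z : E} {δ M c : ℝ} (hM : ∀ y ∈ ball z δ, f y ≤ M) (hx : f x < c) :
    ∀ᶠ lam in 𝓝[>] (0 : ℝ), ∀ p ∈ ball (x + lam • (z - x)) (lam * δ), f p < c := by
  obtain ⟨t, hxt, htc⟩ := EReal.exists_between_coe_real hx
  have hcont : Tendsto (fun lam : ℝ => (1 - lam) * t + lam * M) (𝓝 0) (𝓝 t) := by
    simpa using (show Continuous fun lam : ℝ => (1 - lam) * t + lam * M by fun_prop).tendsto 0
  filter_upwards [self_mem_nhdsWithin,
    nhdsWithin_le_nhds (hcont.eventually (eventually_lt_nhds (EReal.coe_lt_coe_iff.1 htc))),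
    nhdsWithin_le_nhds (eventually_le_nhds zero_lt_one)] with lam hlam hlt hle p hp
  exact (le_on_ball_of_convex_epigraph hf hM hxt.le hlam hle p hp).trans_lt
    (EReal.coe_lt_coe_iff.2 hlt)

end Epigraph

section AddHaar

variable {E : Type*} [NormedAddCommGroup E] [NormedSpace ℝ E] [FiniteDimensional ℝ E]
  [MeasurableSpace E] [BorelSpace E] (μ : Measure E) [μ.IsAddHaarMeasure]

lemma Convex.addHaar_eq_zero_of_interior_eq_empty {s : Set E} (hs : Convex ℝ s)
    (h : interior s = ∅) : μ s = 0 :=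
  measure_mono_null (by simpa [frontier, h] using subset_closure) (hs.addHaar_frontier μ)

lemma measure_inter_ball_div_le_of_null (U : Set E) {x m : E} {r s : ℝ} (hr : 0 < r)
    (hs : 0 < s) (hsub : ball m s ⊆ ball x r) (hnull : μ (ball m s ∩ U) = 0) :
    μ (U ∩ ball x r) / μ (ball x r) ≤ 1 - ENNReal.ofReal ((s / r) ^ finrank ℝ E) := by
  set κ := ENNReal.ofReal ((s / r) ^ finrank ℝ E)
  have hball : μ (ball m s) = κ * μ (ball x r) := by
    rw [Measure.addHaar_ball_of_pos μ m hs, Measure.addHaar_ball_of_pos μ x hr, ← mul_assoc,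
      ← ENNReal.ofReal_mul (by positivity), div_pow, div_mul_cancel₀ _ (by positivity)]
  apply ENNReal.div_le_of_le_mul
  calc μ (U ∩ ball x r) ≤ μ ((ball x r \ ball m s) ∪ (ball m s ∩ U)) :=
        measure_mono fun p hp => by by_cases h : p ∈ ball m s <;> simp_all
    _ ≤ μ (ball x r \ ball m s) := by
        simpa [hnull] using measure_union_le (μ := μ) (ball x r \ ball m s) (ball m s ∩ U)
    _ = μ (ball x r) - κ * μ (ball x r) := by
        rw [measure_sdiff hsub measurableSet_ball.nullMeasurableSet measure_ball_lt_top.ne, hball]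
    _ = (1 - κ) * μ (ball x r) := by
        rw [ENNReal.sub_mul fun _ _ => measure_ball_lt_top.ne, one_mul]

lemma essInf_restrict_le_of_tendsto_density {f : E → EReal}
    (hf : Convex ℝ {p : E × ℝ | f p.1 ≤ p.2}) {U : Set E} {x z : E} {δ M : ℝ} (hδ : 0 < δ)
    (hM : ∀ y ∈ ball z δ, f y ≤ M)
    (hx : Tendsto (fun r => μ (U ∩ ball x r) / μ (ball x r)) (𝓝[>] 0) (𝓝 1)) :
    essInf f (μ.restrict U) ≤ f x := by
  by_contra! hlt
  obtain ⟨c, hxc, hc⟩ := EReal.exists_between_coe_real hlt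
  have hae : μ.restrict U {y | ¬ (c : EReal) < f y} = 0 := ae_iff.1 (ae_lt_of_lt_essInf hc)
  set D := dist z x + δ
  have hD : 0 < D := by positivity
  set κ := ENNReal.ofReal ((δ / D) ^ finrank ℝ E)
  have hscale : Tendsto (fun r => r / D) (𝓝[>] 0) (𝓝[>] 0) := by
    refine tendsto_nhdsWithin_iff.2
      ⟨?_, eventually_nhdsWithin_of_forall fun r hr => div_pos hr hD⟩
    exact ((continuous_id.div_const D).tendsto' 0 0 (zero_div D)).mono_left nhdsWithin_le_nhds
  have hsmall : ∀ᶠ r in 𝓝[>] 0, μ (U ∩ ball x r) / μ (ball x r) ≤ 1 - κ := by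
    filter_upwards [self_mem_nhdsWithin,
      hscale.eventually (eventually_lt_on_ball_of_convex_epigraph hf hM hxc)]
      with r (hr : 0 < r) hball
    have hsub : ball (x + (r / D) • (z - x)) (r / D * δ) ⊆ ball x r := by
      refine ball_subset_ball' (le_of_eq ?_)
      rw [dist_self_add_left, norm_smul, Real.norm_of_nonneg (by positivity), ← dist_eq_norm,
        ← mul_add, add_comm]
      exact div_mul_cancel₀ r hD.ne'
    have hnull : μ (ball (x + (r / D) • (z - x)) (r / D * δ) ∩ U) = 0 :=
      nonpos_iff_eq_zero.1 <| (Measure.le_restrict_apply U _).trans_eq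
        (measure_mono_null (fun p hp => lt_asymm (hball p hp)) hae)
    have hratio : r / D * δ / r = δ / D := by field_simp
    simpa only [hratio] using
      measure_inter_ball_div_le_of_null μ U hr (by positivity) hsub hnull
  have hκ : 1 - κ < 1 :=
    ENNReal.sub_lt_self ENNReal.one_ne_top one_ne_zero (by simp [κ]; positivity)
  exact hκ.not_ge (le_of_tendsto hx hsmall)

end AddHaar

lemma exists_ball_le_of_convex_epigraph {E : Type*} [NormedAddCommGroup E] [NormedSpace ℝ E]
    [FiniteDimensional ℝ E] {f : E → EReal} (hf : Convex ℝ {p : E × ℝ | f p.1 ≤ p.2})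
    (hdom : (interior {x | f x < ⊤}).Nonempty) :
    ∃ z δ, 0 < δ ∧ ∃ M : ℝ, ∀ y ∈ ball z δ, f y ≤ M := by
  borelize E
  obtain ⟨z₀, hz₀⟩ := hdom
  obtain ⟨δ₀, hδ₀, hball⟩ := Metric.isOpen_iff.1 isOpen_interior z₀ hz₀
  have hcover : ball z₀ δ₀ ⊆ ⋃ n : ℕ, {x | f x ≤ n} ∩ ball z₀ δ₀ := fun y hy => by
    have hy' : y ∈ {x | f x < ⊤} := interior_subset (hball hy)
    obtain ⟨t, ht, -⟩ := EReal.exists_between_coe_real hy'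
    exact mem_iUnion.2 ⟨⌈t⌉₊, ht.le.trans (by exact_mod_cast Nat.le_ceil t), hy⟩
  obtain ⟨n, hn⟩ : ∃ n : ℕ, Measure.addHaar ({x | f x ≤ n} ∩ ball z₀ δ₀) ≠ 0 := by
    by_contra! h
    exact (measure_ball_pos Measure.addHaar z₀ hδ₀).ne'
      (measure_mono_null hcover (measure_iUnion_null h))
  have hconv := (convex_sublevel_of_convex_epigraph hf n).inter (convex_ball z₀ δ₀)
  obtain ⟨w, hw⟩ := nonempty_iff_ne_empty.2
    (mt (hconv.addHaar_eq_zero_of_interior_eq_empty Measure.addHaar) hn)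
  obtain ⟨δ, hδ, hwδ⟩ := Metric.isOpen_iff.1 isOpen_interior w hw
  exact ⟨w, δ, hδ, n, fun y hy => (interior_subset (hwδ hy)).1⟩

lemma iInf_mem_le_essInf_restrict {α β : Type*} [MeasurableSpace α] [CompleteLinearOrder β]
    {μ : Measure α} {s : Set α} (hs : NullMeasurableSet s μ) (f : α → β) :
    ⨅ x ∈ s, f x ≤ essInf f (μ.restrict s) :=
  le_essInf_of_ae_le _ ((ae_restrict_mem₀ hs).mono fun y hy => iInf₂_le y hy)

lemma densityOpen_univ {N : ℕ} : DensityOpen (univ : Set (EuclideanSpace ℝ (Fin N))) := by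
  refine ⟨nullMeasurableSet_univ, fun x _ => tendsto_const_nhds.congr' ?_⟩
  filter_upwards [self_mem_nhdsWithin] with r hr
  rw [univ_inter, ENNReal.div_self (measure_ball_pos volume x hr).ne' measure_ball_lt_top.ne]

theorem stmt_6 {N : ℕ} (f : EuclideanSpace ℝ (Fin N) → EReal)
    (hf : Convex ℝ {p : EuclideanSpace ℝ (Fin N) × ℝ | f p.1 ≤ (p.2 : EReal)}) :
    (∀ U : Set (EuclideanSpace ℝ (Fin N)), DensityOpen U →
        (⨅ x ∈ U, f x) = essInf f (volume.restrict U)) ↔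
      ((∀ x, f x = ⊤) ∨ (interior {x | f x < ⊤}).Nonempty) := by
  constructor
  · intro h
    by_contra! hbad
    obtain ⟨⟨x₀, hx₀⟩, hint⟩ := hbad
    have hnull : volume {x | f x < ⊤} = 0 :=
      (convex_dom_of_convex_epigraph hf).addHaar_eq_zero_of_interior_eq_empty volume hint
    have htop : essInf f volume = ⊤ := by
      rw [essInf_congr_ae (g := fun _ => ⊤), essInf_const_top]
      filter_upwards [measure_eq_zero_iff_ae_notMem.1 hnull] with y hy
      simpa using hy
    have hinf := h univ densityOpen_univ
    rw [Measure.restrict_univ, htop] at hinf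
    exact hx₀ (eq_top_iff.2 (hinf ▸ iInf₂_le x₀ (mem_univ x₀)))
  · rintro (htop | hint) U hU
    · obtain rfl : f = fun _ => ⊤ := funext htop
      simp [essInf_const_top]
    · obtain ⟨z, δ, hδ, M, hM⟩ := exists_ball_le_of_convex_epigraph hf hint
      exact (iInf_mem_le_essInf_restrict hU.1 f).antisymm
        (le_iInf₂ fun x hx => essInf_restrict_le_of_tendsto_density volume hf hδ hM (hU.2 x hx))
end

section
/- Let f, g : ℝ^N → ℝ be quasiconvex functions such that f = g almost everywhere with respect to Lebesgue measure. Suppose that the pointwise infimum of f over ℝ^N equals its essential infimum over ℝ^N, and likewise the pointwise infimum of g over ℝ^N equals its essential infimum over ℝ^N. Then for every x ∈ ℝ^N, f is continuous at x if and only if g is continuous at x, and at any such common point of continuity f(x) = g(x). -/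
/-!
Suppose `f` is continuous at `x` and `f = g` a.e., where `g` has convex strict sublevel sets.
From above: near `x` the set `{g < β}` (`β > f x`) is dense, and a convex set in finite
dimensions contains the interior of its closure. From below: near `x` the set `{g < α}`
(`α < f x`) is null. A convex set with nonempty interior has positive measure in every open set
it meets, and one with empty interior is null, in which case `inf g = essInf g` gives `α ≤ g`
everywhere. Hence `g y → f x` as `y → x`.
-/

open MeasureTheory Filter Set Topology

theorem Convex.interior_closure_eq_interior {V : Type*} [NormedAddCommGroup V] [NormedSpace ℝ V]
    [FiniteDimensional ℝ V] {s : Set V} (hs : Convex ℝ s) :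
    interior (closure s) = interior s := by
  rcases (interior s).eq_empty_or_nonempty with hint | hint
  · rw [hint, ← not_nonempty_iff_eq_empty,
      hs.closure.interior_nonempty_iff_affineSpan_eq_top]
    intro hspan
    have hclosure : closure s ⊆ (affineSpan ℝ s : Set V) :=
      closure_minimal (subset_affineSpan ℝ s) (affineSpan ℝ s).closed_of_finiteDimensional
    have : affineSpan ℝ s = ⊤ := top_unique (hspan ▸ affineSpan_le.mpr hclosure)
    exact (hs.interior_nonempty_iff_affineSpan_eq_top.mpr this).ne_empty hint
  · exact hs.interior_closure_eq_interior_of_nonempty_interior hint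

theorem Convex.measure_inter_pos_of_isOpen {E : Type*} [AddCommGroup E] [Module ℝ E]
    [TopologicalSpace E] [IsTopologicalAddGroup E] [ContinuousSMul ℝ E] [MeasurableSpace E]
    {μ : Measure E} [μ.IsOpenPosMeasure] {s U : Set E} (hs : Convex ℝ s)
    (hint : (interior s).Nonempty) (hU : IsOpen U) (hsU : (s ∩ U).Nonempty) :
    0 < μ (s ∩ U) := by
  obtain ⟨y, hys, hyU⟩ := hsU
  have hy : y ∈ closure (interior s) := by
    rw [hs.closure_interior_eq_closure_of_nonempty_interior hint]
    exact subset_closure hys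
  have hne : (interior s ∩ U).Nonempty := by
    rw [inter_comm]
    exact mem_closure_iff.1 hy U hU hyU
  exact ((isOpen_interior.inter hU).measure_pos μ hne).trans_le
    (measure_mono (inter_subset_inter_left U interior_subset))

theorem Convex.addHaar_eq_zero_of_interior_eq_empty_s8 {E : Type*} [NormedAddCommGroup E]
    [NormedSpace ℝ E] [MeasurableSpace E] [BorelSpace E] [FiniteDimensional ℝ E]
    {μ : Measure E} [μ.IsAddHaarMeasure] {s : Set E} (hs : Convex ℝ s)
    (hint : interior s = ∅) : μ s = 0 := by
  have : closure s = frontier s := by rw [frontier, hint, sdiff_empty]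
  exact measure_mono_null (this ▸ subset_closure) (hs.addHaar_frontier μ)

theorem le_of_iInf_eq_essInf {α : Type*} [MeasurableSpace α] {μ : Measure α} {g : α → ℝ}
    (hgi : ⨅ x, (g x : EReal) = essInf (fun x => (g x : EReal)) μ) {a : ℝ}
    (ha : μ {y | g y < a} = 0) (y : α) : a ≤ g y := by
  have hae : (fun _ => (a : EReal)) ≤ᵐ[μ] fun x => (g x : EReal) := by
    refine ae_iff.2 (measure_mono_null (fun z hz => ?_) ha)
    simpa using hz
  have : (a : EReal) ≤ g y := calc
    (a : EReal) ≤ essInf (fun x => (g x : EReal)) μ := le_essInf_of_ae_le _ hae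
    _ = ⨅ x, (g x : EReal) := hgi.symm
    _ ≤ g y := iInf_le _ y
  exact_mod_cast this

section AeEqQuasiconvex

variable {E : Type*} [NormedAddCommGroup E] [NormedSpace ℝ E] [FiniteDimensional ℝ E]
  [MeasurableSpace E] {μ : Measure E} {f g : E → ℝ} {x : E}

theorem eventually_lt_of_ae_eq_of_continuousAt [μ.IsOpenPosMeasure] {β : ℝ}
    (hg : Convex ℝ {y | g y < β}) (hfg : f =ᵐ[μ] g) (hfx : ContinuousAt f x)
    (hβ : f x < β) :
    ∀ᶠ y in 𝓝 x, g y < β := by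
  have hdense : interior {y | f y < β} ⊆ closure {y | g y < β} :=
    ((Measure.dense_of_ae hfg).open_subset_closure_inter isOpen_interior).trans
      (closure_mono fun y ⟨hyf, (hyg : f y = g y)⟩ =>
        show g y < β from hyg ▸ interior_subset (s := {y | f y < β}) hyf)
  have hx : x ∈ interior {y | f y < β} :=
    mem_interior_iff_mem_nhds.2 (hfx (Iio_mem_nhds hβ))
  refine mem_interior_iff_mem_nhds.1 ?_
  rw [← hg.interior_closure_eq_interior]
  exact interior_maximal hdense isOpen_interior hx

variable [BorelSpace E] [μ.IsAddHaarMeasure]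

theorem eventually_le_of_ae_eq_of_continuousAt {α : ℝ} (hg : Convex ℝ {y | g y < α})
    (hfg : f =ᵐ[μ] g) (hgi : ⨅ y, (g y : EReal) = essInf (fun y => (g y : EReal)) μ)
    (hfx : ContinuousAt f x) (hα : α < f x) :
    ∀ᶠ y in 𝓝 x, α ≤ g y := by
  set U := interior {y | α < f y}
  have hU : U ∈ 𝓝 x :=
    isOpen_interior.mem_nhds (mem_interior_iff_mem_nhds.2 (hfx (Ioi_mem_nhds hα)))
  have hnull : μ ({y | g y < α} ∩ U) = 0 := by
    refine measure_mono_null ?_ (ae_iff.1 hfg)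
    rintro y ⟨hyg, hyf⟩ hfgy
    have hαf : α < f y := (interior_subset : U ⊆ _) hyf
    have hgα : g y < α := hyg
    linarith
  rcases (interior {y | g y < α}).eq_empty_or_nonempty with hint | hint
  · exact Eventually.of_forall
      (le_of_iInf_eq_essInf hgi (hg.addHaar_eq_zero_of_interior_eq_empty_s8 hint))
  · filter_upwards [hU] with y hy
    refine not_lt.1 fun hgy => ?_
    have := hg.measure_inter_pos_of_isOpen (μ := μ) hint isOpen_interior ⟨y, hgy, hy⟩
    exact this.ne' hnull

theorem tendsto_nhds_of_ae_eq_of_continuousAt (hg : ∀ α : ℝ, Convex ℝ {y | g y < α})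
    (hfg : f =ᵐ[μ] g) (hgi : ⨅ y, (g y : EReal) = essInf (fun y => (g y : EReal)) μ)
    (hfx : ContinuousAt f x) : Tendsto g (𝓝 x) (𝓝 (f x)) := by
  refine tendsto_order.2
    ⟨fun a ha => ?_, fun b hb => eventually_lt_of_ae_eq_of_continuousAt (hg b) hfg hfx hb⟩
  obtain ⟨c, hac, hcf⟩ := exists_between ha
  exact (eventually_le_of_ae_eq_of_continuousAt (hg c) hfg hgi hfx hcf).mono
    fun y hy => hac.trans_le hy

end AeEqQuasiconvex

theorem stmt_8 {N : ℕ} (f g : EuclideanSpace ℝ (Fin N) → ℝ)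
    (hf : ∀ α : ℝ, Convex ℝ {x | f x < α}) (hg : ∀ α : ℝ, Convex ℝ {x | g x < α})
    (hfg : f =ᵐ[volume] g)
    (hfi : (⨅ x, (f x : EReal)) = essInf (fun x => (f x : EReal)) volume)
    (hgi : (⨅ x, (g x : EReal)) = essInf (fun x => (g x : EReal)) volume) :
    ∀ x : EuclideanSpace ℝ (Fin N),
      (ContinuousAt f x ↔ ContinuousAt g x) ∧
        (ContinuousAt f x → ContinuousAt g x → f x = g x) := by
  intro x
  have hg_lim := fun hfx : ContinuousAt f x => tendsto_nhds_of_ae_eq_of_continuousAt hg hfg hgi hfx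
  have hf_lim := fun hgx : ContinuousAt g x =>
    tendsto_nhds_of_ae_eq_of_continuousAt hf hfg.symm hfi hgx
  exact ⟨⟨fun hfx => continuousAt_of_tendsto_nhds (hg_lim hfx),
      fun hgx => continuousAt_of_tendsto_nhds (hf_lim hgx)⟩,
    fun hfx _ => (eq_of_tendsto_nhds (hg_lim hfx)).symm⟩
end

section
/- Define f : ℝ² → ℝ by f(x₁, x₂) = |x₁| if x₂ ≥ 0 or if (x₂ < 0 and x₁ ≠ 0), and f(0, x₂) = x₂ if x₂ < 0. Then f is quasiconvex, the essential infimum of f over ℝ² with respect to Lebesgue measure equals 0, the union over real α < 0 of the closures of the sublevel sets F_α := {y ∈ ℝ² : f(y) < α} equals {0} × (−∞, 0), the closure of F_0 := {y ∈ ℝ² : f(y) < 0} equals {0} × (−∞, 0], and f is continuous at (0,0). -/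
/-!
Away from the negative vertical half-axis the function is `|x₁|`; on that half-axis it dips to
`x₂ < 0`. Hence every sublevel set is a product of intervals (a vertical segment of the axis for
`α ≤ 0`, a vertical strip for `α > 0`), whose convexity and closures are immediate. The dip lives on a
null set, so `f` is a.e. the continuous function `|x₁|`, whose essential infimum is its infimum `0`.
Finally `|f p| ≤ ‖p‖`, which gives continuity at the origin.
-/

open MeasureTheory Set

theorem Continuous.essInf_eq_iInf {X β : Type*} [TopologicalSpace X] [MeasurableSpace X]
    {μ : Measure X} [μ.IsOpenPosMeasure] [CompleteLinearOrder β] [TopologicalSpace β]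
    [OrderClosedTopology β] {f : X → β} (hf : Continuous f) :
    essInf f μ = ⨅ x, f x := by
  refine le_antisymm (le_iInf fun x => ?_) (le_essInf_of_ae_le _ (ae_of_all _ (iInf_le f)))
  rw [essInf_eq_sSup]
  refine sSup_le fun a ha => not_lt.1 fun hx => ?_
  exact (isOpen_lt hf continuous_const).measure_ne_zero μ ⟨x, hx⟩ ha

noncomputable def dip (p : ℝ × ℝ) : ℝ := if p.2 < 0 ∧ p.1 = 0 then p.2 else |p.1|

lemma setOf_dip_lt_of_nonpos {α : ℝ} (hα : α ≤ 0) :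
    {y | dip y < α} = ({0} : Set ℝ) ×ˢ Iio α := by
  ext ⟨x₁, x₂⟩
  simp only [dip, mem_ofPred_eq, mem_prod, mem_singleton_iff, mem_Iio]
  split_ifs with h
  · exact ⟨fun h₂ => ⟨h.2, h₂⟩, And.right⟩
  · refine ⟨fun h₁ => absurd (h₁.trans_le hα) (abs_nonneg x₁).not_gt, fun h₁ => ?_⟩
    exact absurd ⟨h₁.2.trans_le hα, h₁.1⟩ h

lemma setOf_dip_lt_of_pos {α : ℝ} (hα : 0 < α) :
    {y | dip y < α} = Ioo (-α) α ×ˢ univ := by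
  ext ⟨x₁, x₂⟩
  simp only [dip, mem_ofPred_eq, mem_prod, mem_Ioo, mem_univ, and_true, ← abs_lt]
  split_ifs with h
  · simp [h.2, hα, h.1.trans hα]
  · rfl

lemma convex_setOf_dip_lt (α : ℝ) : Convex ℝ {y | dip y < α} := by
  rcases le_or_gt α 0 with hα | hα
  · rw [setOf_dip_lt_of_nonpos hα]
    exact (convex_singleton 0).prod (convex_Iio α)
  · rw [setOf_dip_lt_of_pos hα]
    exact (convex_Ioo (-α) α).prod convex_univ

lemma closure_setOf_dip_lt_of_nonpos {α : ℝ} (hα : α ≤ 0) :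
    closure {y | dip y < α} = ({0} : Set ℝ) ×ˢ Iic α := by
  rw [setOf_dip_lt_of_nonpos hα, closure_prod_eq, closure_singleton, closure_Iio]

lemma iUnion_closure_setOf_dip_lt_neg :
    ⋃ α ∈ Iio (0 : ℝ), closure {y | dip y < α} = ({0} : Set ℝ) ×ˢ Iio 0 := by
  calc ⋃ α ∈ Iio (0 : ℝ), closure {y | dip y < α}
      _ = ⋃ α ∈ Iio (0 : ℝ), ({0} : Set ℝ) ×ˢ Iic α :=
        iUnion₂_congr fun α hα => closure_setOf_dip_lt_of_nonpos (le_of_lt hα)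
      _ = ({0} : Set ℝ) ×ˢ Iio 0 := by
        rw [← prod_iUnion₂, isLUB_Iio.biUnion_Iic_eq_Iio (lt_irrefl 0)]

lemma dip_ae_eq_abs_fst : dip =ᵐ[volume] fun p => |p.1| := by
  have hnull : volume (({0} : Set ℝ) ×ˢ (univ : Set ℝ)) = 0 := by
    rw [Measure.volume_eq_prod, Measure.prod_prod, Real.volume_singleton, zero_mul]
  refine ae_iff.2 (measure_mono_null (fun p hp => ?_) hnull)
  by_contra h
  simp_all [dip]

lemma essInf_dip : essInf (fun y => (dip y : EReal)) volume = 0 := by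
  have hcont : Continuous fun p : ℝ × ℝ => ((|p.1| : ℝ) : EReal) :=
    continuous_coe_real_ereal.comp (continuous_abs.comp continuous_fst)
  have hae : (fun y => (dip y : EReal)) =ᵐ[volume] fun p => ((|p.1| : ℝ) : EReal) :=
    dip_ae_eq_abs_fst.mono fun p hp => congrArg _ hp
  rw [essInf_congr_ae hae, hcont.essInf_eq_iInf]
  refine le_antisymm (iInf_le_of_le 0 (by simp)) (le_iInf fun p => ?_)
  exact_mod_cast abs_nonneg p.1

lemma abs_dip_le_norm (p : ℝ × ℝ) : |dip p| ≤ ‖p‖ := by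
  unfold dip
  split_ifs
  · exact norm_snd_le p
  · rw [abs_abs]
    exact norm_fst_le p

lemma continuousAt_dip_zero : ContinuousAt dip 0 := by
  have hzero : dip 0 = 0 := by simp [dip]
  rw [ContinuousAt, hzero]
  exact squeeze_zero_norm abs_dip_le_norm tendsto_norm_zero

theorem stmt_18 (f : ℝ × ℝ → ℝ)
    (hf : ∀ p : ℝ × ℝ, f p = if p.2 < 0 ∧ p.1 = 0 then p.2 else |p.1|) :
    (∀ α : ℝ, Convex ℝ {y : ℝ × ℝ | f y < α}) ∧
    essInf (fun y => (f y : EReal)) volume = (0 : EReal) ∧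
    (⋃ α ∈ Set.Iio (0 : ℝ), closure {y : ℝ × ℝ | f y < α}) =
      ({0} : Set ℝ) ×ˢ Set.Iio (0 : ℝ) ∧
    closure {y : ℝ × ℝ | f y < 0} = ({0} : Set ℝ) ×ˢ Set.Iic (0 : ℝ) ∧
    ContinuousAt f (0, 0) := by
  obtain rfl : f = dip := funext hf
  exact ⟨convex_setOf_dip_lt, essInf_dip, iUnion_closure_setOf_dip_lt_neg,
    closure_setOf_dip_lt_of_nonpos le_rfl, continuousAt_dip_zero⟩
end
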